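/- (Proposition 3.8) Let F : (𝔸,C) → (𝔹,D) be a continuous Q-functor between Q-closure spaces, i.e. F^→(C(μ))(y) ≤ D(F^→(μ))(y) for all μ ∈ P𝔸 and y ∈ B. Then F^▷ := D∘F^→ is Q-enriched left adjoint to F^◁ := F^← between the closed presheaves: for all μ ∈ P𝔸 with C(μ) = μ and all λ ∈ P𝔹 with D(λ) = λ, ⨅_{y∈B} (λ(y) ↙ D(F^→(μ))(y)) = ⨅_{x∈A} (F^←(λ)(x) ↙ μ(x)), i.e. P𝔹(D(F^→(μ)), λ) = P𝔸(μ, F^←(λ)). -/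

import Mathlib

open IsQuantale

variable {Q : Type*} [Monoid Q] [CompleteLattice Q] [IsQuantale Q]

/-- Left implication `x ↙ y`: the largest `z` with `z * y ≤ x`. -/
def lres (x y : Q) : Q := sSup {z | z * y ≤ x}

/-- Right implication `y ↘ x`: the largest `z` with `y * z ≤ x`. -/
def rres (y x : Q) : Q := sSup {z | y * z ≤ x}

/-- A Q-category structure on a type `A`. -/
structure IsQCat {A : Type*} (𝔸 : A → A → Q) : Prop where
  refl : ∀ x, 1 ≤ 𝔸 x x
  comp : ∀ x y z, 𝔸 y z * 𝔸 x y ≤ 𝔸 x z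

/-- A Q-distributor `φ : 𝔸 ⇸ 𝔹`. -/
structure IsQDist {A B : Type*} (𝔸 : A → A → Q) (𝔹 : B → B → Q) (φ : A → B → Q) : Prop where
  comp_left : ∀ x y y', 𝔹 y' y * φ x y' ≤ φ x y
  comp_right : ∀ x x' y, φ x' y * 𝔸 x x' ≤ φ x y

/-- A Q-functor `F : 𝔸 → 𝔹`. -/
def IsQFunctor {A B : Type*} (𝔸 : A → A → Q) (𝔹 : B → B → Q) (F : A → B) : Prop :=
  ∀ x x', 𝔸 x x' ≤ 𝔹 (F x) (F x')

/-- A contravariant presheaf on `𝔸`. -/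
def IsContraPsh {A : Type*} (𝔸 : A → A → Q) (μ : A → Q) : Prop :=
  ∀ x x', μ x' * 𝔸 x x' ≤ μ x

/-- A covariant presheaf on `𝔹`. -/
def IsCoPsh {B : Type*} (𝔹 : B → B → Q) (lam : B → Q) : Prop :=
  ∀ y y', 𝔹 y y' * lam y ≤ lam y'

/-- `φ↑(μ)(y) = ⨅ x, φ(x,y) ↙ μ(x)`. -/
def phiUp {A B : Type*} (φ : A → B → Q) (μ : A → Q) : B → Q :=
  fun y => ⨅ x, lres (φ x y) (μ x)

/-- `φ↓(λ)(x) = ⨅ y, λ(y) ↘ φ(x,y)`. -/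
def phiDown {A B : Type*} (φ : A → B → Q) (lam : B → Q) : A → Q :=
  fun x => ⨅ y, rres (lam y) (φ x y)

/-- `φ*(λ)(x) = ⨆ y, λ(y) * φ(x,y)`. -/
def phiStar {A B : Type*} (φ : A → B → Q) (lam : B → Q) : A → Q :=
  fun x => ⨆ y, lam y * φ x y

/-- `φ_*(μ)(y) = ⨅ x, μ(x) ↙ φ(x,y)`. -/
def phiLow {A B : Type*} (φ : A → B → Q) (μ : A → Q) : B → Q :=
  fun y => ⨅ x, lres (μ x) (φ x y)

/-- The underlying set of the Q-category `P𝔸` of contravariant presheaves. -/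
abbrev CPsh {A : Type*} (𝔸 : A → A → Q) := {μ : A → Q // ∀ x x', μ x' * 𝔸 x x' ≤ μ x}

/-- The underlying set of the Q-category `P†𝔹` of covariant presheaves. -/
abbrev CoPsh {B : Type*} (𝔹 : B → B → Q) := {lam : B → Q // ∀ y y', 𝔹 y y' * lam y ≤ lam y'}

/-- The Yoneda embedding `x ↦ 𝔸(·,x)`. -/
def yonedaP {A : Type*} {𝔸 : A → A → Q} (hA : IsQCat 𝔸) (x : A) : CPsh 𝔸 :=
  ⟨fun x' => 𝔸 x' x, fun a b => hA.comp a b x⟩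


/-- The direct image Q-functor `F^→ : P𝔸 → P𝔹`, `F^→(μ)(y) = ⨆ x, μ(x) * 𝔹(y,Fx)`. -/
def fwdPsh {A B : Type*} {𝔸 : A → A → Q} {𝔹 : B → B → Q} (hB : IsQCat 𝔹) (F : A → B)
    (μ : CPsh 𝔸) : CPsh 𝔹 :=
  ⟨fun y => ⨆ x, μ.1 x * 𝔹 y (F x), by
    intro y y'
    rw [Quantale.iSup_mul_distrib]
    refine iSup_le fun x => le_trans ?_ (le_iSup _ x)
    rw [mul_assoc]
    exact mul_le_mul_right (hB.comp y y' (F x)) _⟩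

/-- The inverse image Q-functor `F^← : P𝔹 → P𝔸`, `F^←(λ) = λ ∘ F`. -/
def bwdPsh {A B : Type*} {𝔸 : A → A → Q} {𝔹 : B → B → Q} {F : A → B}
    (hF : IsQFunctor 𝔸 𝔹 F) (lam : CPsh 𝔹) : CPsh 𝔸 :=
  ⟨fun x => lam.1 (F x), fun x x' =>
    le_trans (mul_le_mul_right (hF x x') _) (lam.2 (F x) (F x'))⟩



lemma le_lres_iff {x y z : Q} : z ≤ lres x y ↔ z * y ≤ x := by
  constructor
  · intro h
    calc z * y ≤ lres x y * y := mul_le_mul_left h _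
    _ ≤ x := by
      rw [lres, sSup_mul_distrib]
      exact iSup₂_le fun w hw => hw
  · intro h
    exact le_sSup h

lemma lres_mul_le {x y : Q} : lres x y * y ≤ x := le_lres_iff.mp le_rfl

/-- Proposition 3.8: for a continuous Q-functor `F : (𝔸,C) → (𝔹,D)`,
`F^▷ = D ∘ F^→ ⊣ F^◁ = F^←` between the closed presheaves. -/
theorem continuous_functor_adjunction {A B : Type*} {𝔸 : A → A → Q} {𝔹 : B → B → Q}
    (hA : IsQCat 𝔸) (hB : IsQCat 𝔹)
    (C : CPsh 𝔸 → CPsh 𝔸)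
    (hCext : ∀ (μ : CPsh 𝔸) (x : A), μ.1 x ≤ (C μ).1 x)
    (hCmono : ∀ μ μ' : CPsh 𝔸,
      (⨅ x, lres (μ'.1 x) (μ.1 x)) ≤ ⨅ x, lres ((C μ').1 x) ((C μ).1 x))
    (hCidem : ∀ μ : CPsh 𝔸, C (C μ) = C μ)
    (D : CPsh 𝔹 → CPsh 𝔹)
    (hDext : ∀ (lam : CPsh 𝔹) (y : B), lam.1 y ≤ (D lam).1 y)
    (hDmono : ∀ lam lam' : CPsh 𝔹,
      (⨅ y, lres (lam'.1 y) (lam.1 y)) ≤ ⨅ y, lres ((D lam').1 y) ((D lam).1 y))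
    (hDidem : ∀ lam : CPsh 𝔹, D (D lam) = D lam)
    (F : A → B) (hF : IsQFunctor 𝔸 𝔹 F)
    (hcont : ∀ (μ : CPsh 𝔸) (y : B), (fwdPsh hB F (C μ)).1 y ≤ (D (fwdPsh hB F μ)).1 y) :
    ∀ μ : CPsh 𝔸, C μ = μ → ∀ lam : CPsh 𝔹, D lam = lam →
      (⨅ y, lres (lam.1 y) ((D (fwdPsh hB F μ)).1 y)) =
        ⨅ x, lres (lam.1 (F x)) (μ.1 x) := by
  intro μ hμ lam hlam
  apply le_antisymm
  · apply le_iInf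
    intro x
    rw [le_lres_iff]
    have h1 : μ.1 x ≤ (D (fwdPsh hB F μ)).1 (F x) := by
      refine le_trans ?_ (hDext (fwdPsh hB F μ) (F x))
      refine le_trans ?_ (le_iSup (fun x' => μ.1 x' * 𝔹 (F x) (F x')) x)
      calc μ.1 x = μ.1 x * 1 := (mul_one _).symm
      _ ≤ μ.1 x * 𝔹 (F x) (F x) := mul_le_mul_right (hB.refl (F x)) _
    calc (⨅ y, lres (lam.1 y) ((D (fwdPsh hB F μ)).1 y)) * μ.1 x
        ≤ (⨅ y, lres (lam.1 y) ((D (fwdPsh hB F μ)).1 y)) * (D (fwdPsh hB F μ)).1 (F x) :=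
          mul_le_mul_right h1 _
      _ ≤ lres (lam.1 (F x)) ((D (fwdPsh hB F μ)).1 (F x)) * (D (fwdPsh hB F μ)).1 (F x) :=
          mul_le_mul_left (iInf_le _ (F x)) _
      _ ≤ lam.1 (F x) := lres_mul_le
  · have key : (⨅ x, lres (lam.1 (F x)) (μ.1 x)) ≤
        ⨅ y, lres (lam.1 y) ((fwdPsh hB F μ).1 y) := by
      apply le_iInf
      intro y
      rw [le_lres_iff]
      show (⨅ x, lres (lam.1 (F x)) (μ.1 x)) * (⨆ x, μ.1 x * 𝔹 y (F x)) ≤ lam.1 y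
      rw [Quantale.mul_iSup_distrib]
      refine iSup_le fun x => ?_
      rw [← mul_assoc]
      calc (⨅ x, lres (lam.1 (F x)) (μ.1 x)) * μ.1 x * 𝔹 y (F x)
          ≤ lam.1 (F x) * 𝔹 y (F x) :=
            mul_le_mul_left (le_lres_iff.mp (iInf_le (fun x' => lres (lam.1 (F x')) (μ.1 x')) x)) _
        _ ≤ lam.1 y := lam.2 y (F x)
    refine key.trans ?_
    have := hDmono (fwdPsh hB F μ) lam
    rwa [hlam] at this
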